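/- arXiv:2309.00636 — 3 statements merged into one kernel-verified Lean document; each statement's English description precedes it below -/
import Mathlib

section
/- Define α_j(k) as: α_j(k) = (2k − (2⌊(j−1)/2⌋ + 1))!! · (1/(j−1)!) · 2^{⌊(j−1)/2⌋} · [ (k − ⌊j/2⌋)(k − (⌊j/2⌋+1)) ⋯ (k − (j−2)) ]^{𝟙{j>2}}. Then for every integer n ≥ 3 and every integer k ≥ n−1, the recursion α_n(k) = (1/(n−1)) · ( α_{n−1}(k) − α_{n−2}(k−1) ) holds. -/
/-!
Writing `m = ⌊(j-1)/2⌋`, the bracketed product in `α_j(k)` is the falling factorial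
`(k - ⌊j/2⌋)(k - ⌊j/2⌋ - 1)⋯` of length `m`, so
`α_j(k) = (2(k-m)-1)!! · (k-⌊j/2⌋)^{\underline{m}} · 2^m / (j-1)!`.
Within each parity class of `n`, the three coefficients in the recursion share a double factorial
and a falling factorial, up to one extra linear factor each, and after clearing factorials the
recursion becomes a linear identity in `k`: for `n = 2m+3` and `x = k-m-1` it is
`(2x+1) - (2m+1) = 2(x-m)`.
-/

open Finset

/-- The coefficient `α_j(k)` from the paper:
`α_j(k) = (2k − (2⌊(j−1)/2⌋+1))!! · (1/(j−1)!) · 2^⌊(j−1)/2⌋ ·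
  [(k−⌊j/2⌋)(k−(⌊j/2⌋+1))⋯(k−(j−2))]^{𝟙{j>2}}`,
with the convention `(−1)!! = 1` (the double-factorial argument is `−1` only when
`j = 1, k = 0`, which `Int.toNat` sends to `0`, and `0!! = 1`). -/
noncomputable def alphaCoef (j k : ℕ) : ℝ :=
  (Nat.doubleFactorial (2 * (k : ℤ) - (2 * (((j : ℤ) - 1) / 2) + 1)).toNat : ℝ)
    * ((Nat.factorial (j - 1) : ℝ))⁻¹ * 2 ^ ((j - 1) / 2)
    * (if 2 < j then ∏ i ∈ Finset.Icc (j / 2) (j - 2), ((k : ℝ) - (i : ℝ)) else 1)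

open Nat

theorem Finset.prod_Ico_natCast_sub_eq_descFactorial (R : Type*) [CommRing R] {a k : ℕ}
    (h : a ≤ k) (c : ℕ) :
    ∏ i ∈ Ico a (a + c), ((k : R) - i) = (k - a).descFactorial c := by
  rw [prod_Ico_eq_prod_range, add_tsub_cancel_left, ← descPochhammer_eval_eq_descFactorial,
    descPochhammer_eval_eq_prod_range, Nat.cast_sub h]
  refine prod_congr rfl fun i _ => ?_
  push_cast
  ring

-- At `j = 0` the integer floor `((0 : ℤ) - 1) / 2 = -1` differs from the natural `(0 - 1) / 2 = 0`.
theorem alphaCoef_eq {j k : ℕ} (hj : 0 < j) (hk : j / 2 ≤ k) :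
    alphaCoef j k = (2 * (k - (j - 1) / 2) - 1)‼ * (k - j / 2).descFactorial ((j - 1) / 2)
      * 2 ^ ((j - 1) / 2) / (j - 1)! := by
  have hdf : (2 * (k : ℤ) - (2 * (((j : ℤ) - 1) / 2) + 1)).toNat = 2 * (k - (j - 1) / 2) - 1 := by
    omega
  have hprod : (if 2 < j then ∏ i ∈ Icc (j / 2) (j - 2), ((k : ℝ) - i) else 1)
      = (k - j / 2).descFactorial ((j - 1) / 2) := by
    split_ifs with hj2
    · rw [← Ico_add_one_right_eq_Icc, show j - 2 + 1 = j / 2 + (j - 1) / 2 by omega,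
        prod_Ico_natCast_sub_eq_descFactorial ℝ hk]
    · rw [show (j - 1) / 2 = 0 by omega, Nat.descFactorial_zero, Nat.cast_one]
  rw [alphaCoef, hdf, hprod, div_eq_mul_inv]
  ring

theorem alphaCoef_two_mul_add_one {m k : ℕ} (hk : m ≤ k) :
    alphaCoef (2 * m + 1) k = (2 * (k - m) - 1)‼ * (k - m).descFactorial m * 2 ^ m / (2 * m)! := by
  rw [alphaCoef_eq (by omega) (by omega)]
  simp only [Nat.add_sub_cancel, show (2 * m + 1) / 2 = m by omega, show 2 * m / 2 = m by omega]

theorem alphaCoef_two_mul_add_two {m k : ℕ} (hk : m + 1 ≤ k) :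
    alphaCoef (2 * m + 2) k
      = (2 * (k - m) - 1)‼ * (k - (m + 1)).descFactorial m * 2 ^ m / (2 * m + 1)! := by
  rw [alphaCoef_eq (by omega) (by omega)]
  simp only [show 2 * m + 2 - 1 = 2 * m + 1 by omega, show (2 * m + 2) / 2 = m + 1 by omega,
    show (2 * m + 1) / 2 = m by omega]

theorem alphaCoef_two_mul_add_three_recursion {m k : ℕ} (hk : 2 * m + 2 ≤ k) :
    (2 * m + 2 : ℝ) * alphaCoef (2 * m + 3) k
      = alphaCoef (2 * m + 2) k - alphaCoef (2 * m + 1) (k - 1) := by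
  obtain ⟨y, rfl⟩ : ∃ y, k = y + m + 2 := ⟨k - m - 2, by omega⟩
  rw [show 2 * m + 3 = 2 * (m + 1) + 1 by ring, alphaCoef_two_mul_add_one (by omega),
    alphaCoef_two_mul_add_two (by omega), alphaCoef_two_mul_add_one (by omega)]
  simp only [show y + m + 2 - (m + 1) = y + 1 by omega, show y + m + 2 - m = y + 2 by omega,
    show y + m + 2 - 1 - m = y + 1 by omega, show 2 * (y + 1) - 1 = 2 * y + 1 by omega,
    show 2 * (y + 2) - 1 = 2 * y + 1 + 2 by omega, Nat.doubleFactorial_add_two,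
    Nat.descFactorial_succ, show 2 * (m + 1) = 2 * m + 1 + 1 by ring, Nat.factorial_succ]
  push_cast [Nat.cast_sub (by omega : m ≤ y + 1)]
  field_simp
  ring

theorem alphaCoef_two_mul_add_four_recursion {m k : ℕ} (hk : 2 * m + 3 ≤ k) :
    (2 * m + 3 : ℝ) * alphaCoef (2 * m + 4) k
      = alphaCoef (2 * m + 3) k - alphaCoef (2 * m + 2) (k - 1) := by
  obtain ⟨y, rfl⟩ : ∃ y, k = y + m + 2 := ⟨k - m - 2, by omega⟩
  rw [show 2 * m + 4 = 2 * (m + 1) + 2 by ring, show 2 * m + 3 = 2 * (m + 1) + 1 by ring,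
    alphaCoef_two_mul_add_two (by omega), alphaCoef_two_mul_add_one (by omega),
    alphaCoef_two_mul_add_two (by omega)]
  simp only [show y + m + 2 - (m + 1 + 1) = y by omega, show y + m + 2 - (m + 1) = y + 1 by omega,
    show y + m + 2 - 1 - (m + 1) = y by omega, show y + m + 2 - 1 - m = y + 1 by omega,
    Nat.succ_descFactorial_succ, Nat.descFactorial_succ, show 2 * (m + 1) = 2 * m + 1 + 1 by ring,
    Nat.factorial_succ]
  push_cast [Nat.cast_sub (by omega : m ≤ y)]
  field_simp
  ring

/-- the recursion `α_n(k) = (1/(n−1))(α_{n−1}(k) − α_{n−2}(k−1))`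
for every integer `n ≥ 3` and every integer `k ≥ n−1`. -/
theorem stmt3 (n k : ℕ) (hn : 3 ≤ n) (hk : n - 1 ≤ k) :
    alphaCoef n k = ((n : ℝ) - 1)⁻¹ * (alphaCoef (n - 1) k - alphaCoef (n - 2) (k - 1)) := by
  obtain ⟨m, rfl | rfl⟩ : ∃ m, n = 2 * m + 3 ∨ n = 2 * m + 4 := ⟨(n - 3) / 2, by omega⟩
  · rw [show 2 * m + 3 - 1 = 2 * m + 2 by omega, show 2 * m + 3 - 2 = 2 * m + 1 by omega,
      ← alphaCoef_two_mul_add_three_recursion (by omega),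
      show ((2 * m + 3 : ℕ) : ℝ) - 1 = 2 * m + 2 by push_cast; ring,
      inv_mul_cancel_left₀ (by positivity)]
  · rw [show 2 * m + 4 - 1 = 2 * m + 3 by omega, show 2 * m + 4 - 2 = 2 * m + 2 by omega,
      ← alphaCoef_two_mul_add_four_recursion (by omega),
      show ((2 * m + 4 : ℕ) : ℝ) - 1 = 2 * m + 3 by push_cast; ring,
      inv_mul_cancel_left₀ (by positivity)]
end

section
/- For α_j(k) defined as in the paper, if n > 4 and n is even, then α_{n−1}(k) − α_{n−2}(k−1) = (2k−(n−1))!! · (1/(n−2)!) · 2^{(n−2)/2} · (k − n/2)(k − (n/2+1)) ⋯ (k − (n−2)) for all integers k ≥ n−1. -/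
/-!
Write `n = 2m + 6`. Both coefficients carry the same double factorial `(2k − n + 1)!!`, and after
the shift `k ↦ k − 1` all three falling products share the factor `P = ∏_{i=m+3}^{2m+3} (k − i)`,
peeled off at the bottom of `α_{n−1}(k)` and at the top of the right-hand side. With
`(2m+4)! = (2m+4)·(2m+3)!` the claim becomes `2(k − m − 2)/(2m + 4) − 1 = 2(k − 2m − 4)/(2m + 4)`.
-/

open Finset

open Nat

lemma prod_Icc_comp_add_one {M : Type*} [CommMonoid M] (f : ℕ → M) (a b : ℕ) :
    ∏ i ∈ Icc a b, f (i + 1) = ∏ i ∈ Icc (a + 1) (b + 1), f i := by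
  rw [← map_add_right_Icc, prod_map]
  rfl

lemma alphaCoef_two_mul_add_three (m k : ℕ) :
    alphaCoef (2 * m + 3) k = ((2 * k - (2 * m + 3))‼ : ℝ) * ((2 * m + 2)! : ℝ)⁻¹ * 2 ^ (m + 1)
      * ∏ i ∈ Icc (m + 1) (2 * m + 1), ((k : ℝ) - i) := by
  rw [alphaCoef, if_pos (by omega)]
  congr 5 <;> omega

lemma alphaCoef_two_mul_add_four (m k : ℕ) :
    alphaCoef (2 * m + 4) k = ((2 * k - (2 * m + 3))‼ : ℝ) * ((2 * m + 3)! : ℝ)⁻¹ * 2 ^ (m + 1)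
      * ∏ i ∈ Icc (m + 2) (2 * m + 2), ((k : ℝ) - i) := by
  rw [alphaCoef, if_pos (by omega)]
  congr 5 <;> omega

lemma falling_prod_difference (m : ℕ) (c x : ℝ) :
    c * ((2 * m + 4)! : ℝ)⁻¹ * 2 ^ (m + 2) * ∏ i ∈ Icc (m + 2) (2 * m + 3), (x - i)
        - c * ((2 * m + 3)! : ℝ)⁻¹ * 2 ^ (m + 1) * ∏ i ∈ Icc (m + 2) (2 * m + 2), (x - 1 - i)
      = c * ((2 * m + 4)! : ℝ)⁻¹ * 2 ^ (m + 2) * ∏ i ∈ Icc (m + 3) (2 * m + 4), (x - i) := by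
  set P := ∏ i ∈ Icc (m + 3) (2 * m + 3), (x - i)
  have hbot : ∏ i ∈ Icc (m + 2) (2 * m + 3), (x - i) = (x - (m + 2)) * P := by
    rw [← mul_prod_Ioc_eq_prod_Icc (by omega), ← Icc_add_one_left_eq_Ioc]
    push_cast
    rfl
  have hshift : ∏ i ∈ Icc (m + 2) (2 * m + 2), (x - 1 - i) = P := by
    convert prod_Icc_comp_add_one (fun i : ℕ => x - i) (m + 2) (2 * m + 2) using 2
    push_cast
    ring
  have htop : ∏ i ∈ Icc (m + 3) (2 * m + 4), (x - i) = P * (x - (2 * m + 4)) := by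
    rw [prod_Icc_succ_top (by omega)]
    push_cast
    ring
  have hfact : ((2 * m + 4)! : ℝ) = (2 * m + 4) * (2 * m + 3)! := by
    rw [factorial_succ]
    push_cast
    ring
  rw [hbot, hshift, htop, hfact]
  field_simp
  ring

/-- for even `n > 4` and `k ≥ n − 1`,
`α_{n−1}(k) − α_{n−2}(k−1) = (2k−(n−1))!! (1/(n−2)!) 2^{(n−2)/2} (k−n/2)⋯(k−(n−2))`. -/
theorem stmt9 (n k : ℕ) (hn : 4 < n) (hne : Even n) (hk : n - 1 ≤ k) :
    alphaCoef (n - 1) k - alphaCoef (n - 2) (k - 1) =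
      (Nat.doubleFactorial (2 * k - (n - 1)) : ℝ) * ((Nat.factorial (n - 2) : ℝ))⁻¹
        * 2 ^ ((n - 2) / 2) * ∏ m ∈ Finset.Icc (n / 2) (n - 2), ((k : ℝ) - (m : ℝ)) := by
  obtain ⟨m, rfl⟩ : ∃ m, n = 2 * m + 6 := by
    obtain ⟨t, ht⟩ := hne
    exact ⟨t - 3, by omega⟩
  have hk1 : ((k - 1 : ℕ) : ℝ) = k - 1 := by
    rw [Nat.cast_sub (by omega), Nat.cast_one]
  rw [show 2 * m + 6 - 1 = 2 * (m + 1) + 3 by omega, show 2 * m + 6 - 2 = 2 * m + 4 by omega,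
    alphaCoef_two_mul_add_three, alphaCoef_two_mul_add_four, hk1,
    show 2 * (k - 1) - (2 * m + 3) = 2 * k - (2 * (m + 1) + 3) by omega,
    show (2 * m + 4) / 2 = m + 2 by omega, show (2 * m + 6) / 2 = m + 3 by omega]
  exact falling_prod_difference m _ k
end

section
/- For α_j(k) defined as in the paper, if n > 4 and n is odd, then α_{n−1}(k) − α_{n−2}(k−1) = (2k−n)!! · (1/(n−2)!) · 2^{(n−1)/2} · (k − (n−1)/2)(k − ((n−1)/2+1)) ⋯ (k − (n−2)) for all integers k ≥ n−1. -/
open Finset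

/-! Write `n = 2m + 3` and `k = l + 1`. Then `α_{n-1}(k)` and `α_{n-2}(k-1)` share the factor
`2^m (2l-2m-1)!! ∏_{i=m}^{2m-1} (l - i)`, and what remains is
`(2l-2m+1)/(2m+1)! - 1/(2m)! = 2(l-2m)/(2m+1)!`; the factor `l - 2m` extends the product by one
term and the `2` raises the power of two. -/

theorem prod_Icc_add_one_natCast_sub {R : Type*} [CommRing R] (x a b : ℕ) :
    ∏ i ∈ Icc (a + 1) (b + 1), (((x + 1 : ℕ) : R) - i) = ∏ i ∈ Icc a b, ((x : R) - i) := by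
  rw [← map_add_right_Icc, prod_map]
  refine prod_congr rfl fun i _ => ?_
  simp only [addRightEmbedding_apply]
  push_cast
  ring

theorem alphaCoef_two_mul_add_one_s10 (m k : ℕ) (hm : 1 ≤ m) :
    alphaCoef (2 * m + 1) k = ((2 * k - (2 * m + 1)).doubleFactorial : ℝ)
      * ((2 * m).factorial : ℝ)⁻¹ * 2 ^ m * ∏ i ∈ Icc m (2 * m - 1), ((k : ℝ) - i) := by
  have hdf : (2 * (k : ℤ) - (2 * ((((2 * m + 1 : ℕ) : ℤ) - 1) / 2) + 1)).toNat
      = 2 * k - (2 * m + 1) := by omega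
  rw [alphaCoef, hdf, if_pos (by omega), show 2 * m + 1 - 1 = 2 * m by omega,
    show 2 * m / 2 = m by omega, show (2 * m + 1) / 2 = m by omega,
    show 2 * m + 1 - 2 = 2 * m - 1 by omega]

theorem alphaCoef_two_mul_add_two_s10 (m k : ℕ) :
    alphaCoef (2 * m + 2) k = ((2 * k - (2 * m + 1)).doubleFactorial : ℝ)
      * ((2 * m + 1).factorial : ℝ)⁻¹ * 2 ^ m * ∏ i ∈ Icc (m + 1) (2 * m), ((k : ℝ) - i) := by
  have hdf : (2 * (k : ℤ) - (2 * ((((2 * m + 2 : ℕ) : ℤ) - 1) / 2) + 1)).toNat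
      = 2 * k - (2 * m + 1) := by omega
  rw [alphaCoef, hdf, show 2 * m + 2 - 1 = 2 * m + 1 by omega, show (2 * m + 1) / 2 = m by omega,
    show (2 * m + 2) / 2 = m + 1 by omega, show 2 * m + 2 - 2 = 2 * m by omega]
  split_ifs with h
  · rfl
  · obtain rfl : m = 0 := by omega
    simp

theorem alphaCoef_two_mul_add_two_sub (m l : ℕ) (hm : 1 ≤ m) (hl : m < l) :
    alphaCoef (2 * m + 2) (l + 1) - alphaCoef (2 * m + 1) l =
      ((2 * l - (2 * m + 1)).doubleFactorial : ℝ) * ((2 * m + 1).factorial : ℝ)⁻¹ * 2 ^ (m + 1)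
        * ∏ i ∈ Icc (m + 1) (2 * m + 1), (((l + 1 : ℕ) : ℝ) - i) := by
  set P := ∏ i ∈ Icc m (2 * m - 1), ((l : ℝ) - i)
  have hP : ∏ i ∈ Icc (m + 1) (2 * m), (((l + 1 : ℕ) : ℝ) - i) = P := by
    rw [show 2 * m = 2 * m - 1 + 1 by omega, prod_Icc_add_one_natCast_sub]
  have hP' : ∏ i ∈ Icc (m + 1) (2 * m + 1), (((l + 1 : ℕ) : ℝ) - i) = P * ((l : ℝ) - 2 * m) := by
    rw [prod_Icc_add_one_natCast_sub, show 2 * m = 2 * m - 1 + 1 by omega,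
      prod_Icc_succ_top (by omega), Nat.sub_add_cancel (by omega)]
    push_cast
    rfl
  have hD : (2 * (l + 1) - (2 * m + 1)).doubleFactorial
      = (2 * l - (2 * m + 1) + 2) * (2 * l - (2 * m + 1)).doubleFactorial := by
    rw [← Nat.doubleFactorial_add_two,
      show 2 * (l + 1) - (2 * m + 1) = 2 * l - (2 * m + 1) + 2 by omega]
  rw [alphaCoef_two_mul_add_two_s10, alphaCoef_two_mul_add_one_s10 _ _ hm, hP, hP', hD, Nat.factorial_succ]
  push_cast [Nat.cast_sub (show 2 * m + 1 ≤ 2 * l by omega)]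
  field_simp
  ring

/-- for odd `n > 4` and `k ≥ n − 1`,
`α_{n−1}(k) − α_{n−2}(k−1) = (2k−n)!! (1/(n−2)!) 2^{(n−1)/2} (k−(n−1)/2)⋯(k−(n−2))`. -/
theorem stmt10 (n k : ℕ) (hn : 4 < n) (hno : Odd n) (hk : n - 1 ≤ k) :
    alphaCoef (n - 1) k - alphaCoef (n - 2) (k - 1) =
      (Nat.doubleFactorial (2 * k - n) : ℝ) * ((Nat.factorial (n - 2) : ℝ))⁻¹
        * 2 ^ ((n - 1) / 2) * ∏ m ∈ Finset.Icc ((n - 1) / 2) (n - 2), ((k : ℝ) - (m : ℝ)) := by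
  obtain ⟨m, rfl⟩ : ∃ m, n = 2 * m + 3 := ⟨(n - 3) / 2, by obtain ⟨t, rfl⟩ := hno; omega⟩
  obtain ⟨l, rfl⟩ : ∃ l, k = l + 1 := ⟨k - 1, by omega⟩
  rw [show 2 * m + 3 - 1 = 2 * m + 2 by omega, show 2 * m + 3 - 2 = 2 * m + 1 by omega,
    show l + 1 - 1 = l by omega, show 2 * (l + 1) - (2 * m + 3) = 2 * l - (2 * m + 1) by omega,
    show (2 * m + 2) / 2 = m + 1 by omega]
  exact alphaCoef_two_mul_add_two_sub m l (by omega) (by omega)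
end
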